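/- Let X be a Banach space, Ω a metric space, and μ a σ-finite Borel measure on Ω that is strictly positive (every nonempty open ball has positive measure) and locally finite (every point has a neighborhood of finite measure). Let N : Ω → B(X) be strongly continuous (t ↦ N(t)x is continuous for every x ∈ X). Suppose that for every f ∈ L¹(Ω, μ) there exists a bounded operator N_f ∈ B(X) with ⟨N_f x, x'⟩ = ∫_Ω f(t) ⟨N(t)x, x'⟩ dμ(t) for all x ∈ X, x' ∈ X', and that the set {N_f : ‖f‖_{L¹} ≤ 1} is R-bounded with constant C. Then the set {N(t) : t ∈ Ω} is R-bounded with constant at most C. -/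

import Mathlib

/-!
Fix `t ∈ Ω`, `x ∈ X` and `δ > 0`. By strong continuity, `‖N(s)x - N(t)x‖ ≤ δ` on an open
neighbourhood `V` of `t`, which we may take of finite and (by strict positivity) positive
measure. The normalized indicator `f = 1_V / μ(V)` has `‖f‖_{L¹} = ∫ f = 1`, so testing
against functionals shows `‖N_f x - N(t)x‖ ≤ δ`. Thus every `N(t)` is a pointwise limit of
members of the `R`-bounded family `{N_f}`, and Rademacher averages of finitely many vectors
are stable under such limits.
-/

open MeasureTheory

/-- The Rademacher average `2^(-n) ∑_{ε ∈ {-1,1}^n} ‖∑ i ε_i v_i‖`. -/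
noncomputable def radAvg {X : Type*} [NormedAddCommGroup X] (n : ℕ) (v : Fin n → X) : ℝ :=
  ((2 : ℝ) ^ n)⁻¹ * ∑ ε : Fin n → Bool, ‖∑ i, (if ε i then v i else -v i)‖

/-- `R`-boundedness of a set of operators with constant `C`. -/
def RBounded {X : Type*} [NormedAddCommGroup X] [NormedSpace ℂ X]
    (τ : Set (X →L[ℂ] X)) (C : ℝ) : Prop :=
  ∀ (n : ℕ) (T : Fin n → X →L[ℂ] X), (∀ i, T i ∈ τ) → ∀ x : Fin n → X,
    radAvg n (fun i => T i (x i)) ≤ C * radAvg n x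

open Filter Topology

section RademacherAverage

variable {X : Type*} [NormedAddCommGroup X]

lemma norm_sum_sign_sub_sum_sign_le {n : ℕ} (ε : Fin n → Bool) (a b : Fin n → X) :
    ‖∑ i, (if ε i then a i else -a i) - ∑ i, (if ε i then b i else -b i)‖ ≤
      ∑ i, ‖a i - b i‖ := by
  rw [← Finset.sum_sub_distrib]
  refine (norm_sum_le _ _).trans (Finset.sum_le_sum fun i _ => ?_)
  cases ε i <;> simp [neg_add_eq_sub, norm_sub_rev]

lemma radAvg_le_radAvg_add_sum_norm_sub (n : ℕ) (a b : Fin n → X) :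
    radAvg n a ≤ radAvg n b + ∑ i, ‖a i - b i‖ := by
  calc radAvg n a ≤ ((2 : ℝ) ^ n)⁻¹ * ∑ ε : Fin n → Bool,
        (‖∑ i, (if ε i then b i else -b i)‖ + ∑ i, ‖a i - b i‖) := by
        unfold radAvg
        gcongr with ε
        grw [norm_le_norm_add_norm_sub' _ (∑ i, (if ε i then b i else -b i)),
          norm_sum_sign_sub_sum_sign_le ε a b]
    _ = radAvg n b + ∑ i, ‖a i - b i‖ := by
        rw [Finset.sum_add_distrib, Finset.sum_const, Finset.card_univ, Fintype.card_fun,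
          Fintype.card_bool, Fintype.card_fin, nsmul_eq_mul, radAvg]
        push_cast
        field_simp

variable [NormedSpace ℂ X]

lemma RBounded.of_forall_approx {τ σ : Set (X →L[ℂ] X)} {C : ℝ} (hτ : RBounded τ C)
    (happrox : ∀ T ∈ σ, ∀ (x : X) (δ : ℝ), 0 < δ → ∃ S ∈ τ, ‖T x - S x‖ ≤ δ) :
    RBounded σ C := by
  intro n T hT x
  refine le_of_forall_pos_le_add fun ε hε => ?_
  choose S hSτ hS using fun i => happrox (T i) (hT i) (x i) (ε / (n + 1)) (by positivity)
  have hsum : ∑ i, ‖T i (x i) - S i (x i)‖ ≤ ε := calc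
    _ ≤ n * (ε / (n + 1)) := by
      simpa using Finset.sum_le_card_nsmul Finset.univ _ _ fun i _ => hS i
    _ ≤ ε := by
      rw [mul_div_assoc', div_le_iff₀ (by positivity)]
      nlinarith
  linarith [radAvg_le_radAvg_add_sum_norm_sub n (fun i => T i (x i)) (fun i => S i (x i)),
    hτ n S hSτ x]

end RademacherAverage

lemma Metric.isOpenPosMeasure_of_measure_ball_pos {Ω : Type*} [PseudoMetricSpace Ω]
    [MeasurableSpace Ω] {μ : Measure Ω} (h : ∀ (t : Ω) (r : ℝ), 0 < r → 0 < μ (ball t r)) :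
    μ.IsOpenPosMeasure where
  open_pos U hU := by
    rintro ⟨t, ht⟩
    obtain ⟨r, hr, hball⟩ := Metric.isOpen_iff.1 hU t ht
    exact ((h t r hr).trans_le (measure_mono hball)).ne'

section Averaging

variable {Ω : Type*} [TopologicalSpace Ω] [MeasurableSpace Ω] {μ : Measure Ω}

lemma exists_isOpen_mem_subset_measure_pos_lt_top [μ.IsOpenPosMeasure]
    [IsLocallyFiniteMeasure μ] {t : Ω} {U : Set Ω} (hU : U ∈ 𝓝 t) :
    ∃ V, IsOpen V ∧ t ∈ V ∧ V ⊆ U ∧ 0 < μ V ∧ μ V < ⊤ := by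
  obtain ⟨W, hW, hWfin⟩ := μ.finiteAt_nhds t
  refine ⟨interior (W ∩ U), isOpen_interior, mem_interior_iff_mem_nhds.2 (inter_mem hW hU),
    interior_subset.trans Set.inter_subset_right, ?_, ?_⟩
  · exact isOpen_interior.measure_pos μ ⟨t, mem_interior_iff_mem_nhds.2 (inter_mem hW hU)⟩
  · exact (measure_mono (interior_subset.trans Set.inter_subset_left)).trans_lt hWfin

lemma exists_integral_eq_one_support_subset (𝕜 : Type*) [RCLike 𝕜] [OpensMeasurableSpace Ω]
    [μ.IsOpenPosMeasure] [IsLocallyFiniteMeasure μ] {t : Ω} {U : Set Ω} (hU : U ∈ 𝓝 t) :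
    ∃ f : Ω → 𝕜, Integrable f μ ∧ ∫ s, f s ∂μ = 1 ∧ ∫ s, ‖f s‖ ∂μ = 1 ∧
      Function.support f ⊆ U := by
  obtain ⟨V, hV, -, hVU, hpos, hfin⟩ := exists_isOpen_mem_subset_measure_pos_lt_top (μ := μ) hU
  have hc : 0 < μ.real V := ENNReal.toReal_pos hpos.ne' hfin.ne
  refine ⟨V.indicator fun _ => ((μ.real V)⁻¹ : 𝕜),
    (integrable_indicator_iff hV.measurableSet).2 (integrableOn_const hfin.ne), ?_, ?_,
    Set.support_indicator_subset.trans hVU⟩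
  · rw [integral_indicator_const _ hV.measurableSet, RCLike.real_smul_eq_coe_mul,
      mul_inv_cancel₀ (RCLike.ofReal_ne_zero.2 hc.ne')]
  · simp_rw [norm_indicator_eq_indicator_norm]
    rw [integral_indicator_const _ hV.measurableSet]
    simp [abs_of_pos hc, hc.ne']

end Averaging

lemma norm_sub_le_of_forall_dual_eq_integral {𝕜 E Ω : Type*} [RCLike 𝕜]
    [NormedAddCommGroup E] [NormedSpace 𝕜 E] [MeasurableSpace Ω] {μ : Measure Ω}
    {f : Ω → 𝕜} {g : Ω → E} {y z : E} {δ : ℝ} (hf : Integrable f μ)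
    (hf_one : ∫ s, f s ∂μ = 1) (hf_norm : ∫ s, ‖f s‖ ∂μ ≤ 1)
    (hg : ∀ x' : StrongDual 𝕜 E, AEStronglyMeasurable (fun s => x' (g s)) μ)
    (hδ : 0 ≤ δ) (hclose : ∀ s ∈ Function.support f, ‖g s - y‖ ≤ δ)
    (hz : ∀ x' : StrongDual 𝕜 E, x' z = ∫ s, f s * x' (g s) ∂μ) : ‖z - y‖ ≤ δ := by
  refine NormedSpace.norm_le_dual_bound 𝕜 _ hδ fun x' => ?_
  have hbound : ∀ s, ‖f s * (x' (g s) - x' y)‖ ≤ ‖f s‖ * (δ * ‖x'‖) := by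
    intro s
    by_cases hs : f s = 0
    · simp [hs]
    rw [norm_mul, ← map_sub, mul_comm δ]
    gcongr
    exact x'.le_of_opNorm_le_of_le le_rfl (hclose s hs)
  have hint : Integrable (fun s => f s * (x' (g s) - x' y)) μ :=
    (hf.norm.mul_const _).mono'
      (hf.aestronglyMeasurable.mul ((hg x').sub aestronglyMeasurable_const))
      (ae_of_all _ hbound)
  have hint' : Integrable (fun s => f s * x' (g s)) μ :=
    (hint.add (hf.mul_const (x' y))).congr (ae_of_all _ fun s => by simp [mul_sub])
  calc ‖x' (z - y)‖ = ‖∫ s, f s * (x' (g s) - x' y) ∂μ‖ := by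
        simp_rw [mul_sub]
        rw [integral_sub hint' (hf.mul_const _), integral_mul_const, hf_one, one_mul, map_sub, hz]
    _ ≤ ∫ s, ‖f s‖ * (δ * ‖x'‖) ∂μ :=
        norm_integral_le_of_norm_le (hf.norm.mul_const _) (ae_of_all _ hbound)
    _ ≤ δ * ‖x'‖ := by
        rw [integral_mul_const]
        exact mul_le_of_le_one_left (by positivity) hf_norm

theorem stmt_13 {X : Type*} [NormedAddCommGroup X] [NormedSpace ℂ X]
    {Ω : Type*} [MetricSpace Ω] [MeasurableSpace Ω] [BorelSpace Ω]
    (μ : Measure Ω) [IsLocallyFiniteMeasure μ]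
    (hpos : ∀ (t : Ω) (r : ℝ), 0 < r → 0 < μ (Metric.ball t r))
    (N : Ω → X →L[ℂ] X)
    (hcont : ∀ x : X, Continuous fun t => N t x)
    (hNf : ∀ f : Ω → ℂ, Integrable f μ → ∃ T : X →L[ℂ] X,
      ∀ (x : X) (x' : X →L[ℂ] ℂ), x' (T x) = ∫ t, f t * x' (N t x) ∂μ)
    (C : ℝ)
    (hR : RBounded {T : X →L[ℂ] X | ∃ f : Ω → ℂ, Integrable f μ ∧ (∫ t, ‖f t‖ ∂μ) ≤ 1 ∧
      ∀ (x : X) (x' : X →L[ℂ] ℂ), x' (T x) = ∫ t, f t * x' (N t x) ∂μ} C) :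
    RBounded {T : X →L[ℂ] X | ∃ t : Ω, T = N t} C := by
  have := Metric.isOpenPosMeasure_of_measure_ball_pos hpos
  refine hR.of_forall_approx ?_
  rintro _ ⟨t, rfl⟩ x δ hδ
  have hU := (hcont x).continuousAt.preimage_mem_nhds (Metric.closedBall_mem_nhds (N t x) hδ)
  obtain ⟨f, hf, hf_one, hf_norm, hf_supp⟩ :=
    exists_integral_eq_one_support_subset ℂ (μ := μ) hU
  obtain ⟨T, hT⟩ := hNf f hf
  refine ⟨T, ⟨f, hf, hf_norm.le, hT⟩, ?_⟩
  rw [norm_sub_rev]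
  exact norm_sub_le_of_forall_dual_eq_integral hf hf_one hf_norm.le
    (fun x' => (x'.continuous.comp (hcont x)).aestronglyMeasurable) hδ.le
    (fun s hs => by simpa [dist_eq_norm] using hf_supp hs) (hT x)
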